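/- Fix positive integers N, n, p, m_1, …, m_N, matrices A ∈ ℝ^{n×n}, B^j ∈ ℝ^{n×m_j}, C ∈ ℝ^{p×n}, D^j ∈ ℝ^{p×m_j}, symmetric Q^i ∈ ℝ^{p×p}, R^{ij} ∈ ℝ^{m_j×m_j}, and δ^i ∈ (0,1) for i, j ∈ {1,…,N}. Let K^{j*}, K̃^j ∈ ℝ^{m_j×n} satisfy ‖K̃^j − K^{j*}‖₂ ≤ ε for every j. Set F^* = A + Σ_j B^j K^{j*}, G^* = C + Σ_j D^j K^{j*}, F̃ = A + Σ_j B^j K̃^j, G̃ = C + Σ_j D^j K̃^j, λ := ‖F^*‖₂, b := Σ_j ‖B^j‖₂, d := Σ_j ‖D^j‖₂, and assume λ + bε < 1. Let M := sup_{t≥2} (t−1)(λ+bε)^{t−2} (finite), g(ε) := (‖G^*‖₂ + dε) M b ε + dε, G_{i1}(ε) := 2 g(ε) ‖Q^i‖₂ (‖G^*‖₂ + dε), G_{i2}(ε) := ε² Σ_j ‖R^{ij}‖₂ (‖K^{j*}‖₂ b M + 1) + 2ε Σ_j ‖R^{ij}‖₂ ‖K^{j*}‖₂ (‖K^{j*}‖₂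 b M + 1), and θ_i(ε) := G_{i1}(ε) + G_{i2}(ε). For x₁ ∈ ℝ^n define J^i(x₁) := ½ Σ_{t=1}^∞ (δ^i)^{t−1} x₁^⊤ ((F^*)^{t−1})^⊤ [ (G^*)^⊤ Q^i G^* + Σ_j (K^{j*})^⊤ R^{ij} K^{j*} ] (F^*)^{t−1} x₁ and J̃^i(x₁) := ½ Σ_{t=1}^∞ (δ^i)^{t−1} x₁^⊤ (F̃^{t−1})^⊤ [ G̃^⊤ Q^i G̃ + Σ_j (K̃^j)^⊤ R^{ij} K̃^j ] F̃^{t−1} x₁ (both series converge absolutely). Then for every i ∈ {1,…,N} and every x₁ ∈ ℝ^n: |J̃^i(x₁) − J^i(x₁)| ≤ ½ ‖x₁‖₂² · θ_i(ε) / (1 − δ^i). -/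

import Mathlib

/-!
Both costs are discounted series of quadratic forms `xᵀ (Fᵗ)ᵀ W Fᵗ x`, so it suffices to bound
the perturbation of each summand by `θᵢ ‖x‖²` uniformly in `t` and sum the geometric series.
Since `(Fᵗ)ᵀ (GᵀQG + Σ KᵀRK) Fᵗ` is the same weight built from `G Fᵗ` and `K Fᵗ`, that
perturbation is controlled by `‖G̃ F̃ᵗ − G* F*ᵗ‖` and `‖K̃ F̃ᵗ − K* F*ᵗ‖`, and these in turn by
`‖F̃ᵗ − F*ᵗ‖ ≤ t (λ + bε)ᵗ⁻¹ ‖F̃ − F*‖ ≤ M b ε`: both closed loops have norm at most `λ + bε < 1`.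
-/

open Matrix BigOperators

/-- The spectral (operator 2-)norm of a real matrix. -/
noncomputable def sn {r c : ℕ} (A : Matrix (Fin r) (Fin c) ℝ) : ℝ :=
  ‖LinearMap.toContinuousLinearMap (Matrix.toEuclideanLin A)‖

open Finset
open scoped Matrix.Norms.L2Operator

section NormedRing

variable {R : Type*} [SeminormedRing R]

theorem norm_pow_le_one_of_norm_le_one (h1 : ‖(1 : R)‖ ≤ 1) {X : R} (hX : ‖X‖ ≤ 1) :
    ∀ t : ℕ, ‖X ^ t‖ ≤ 1
  | 0 => by rwa [pow_zero]
  | t + 1 => (norm_pow_le' X t.succ_pos).trans (pow_le_one₀ (norm_nonneg X) hX)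

theorem norm_pow_succ_sub_pow_succ_le {X Y : R} {ρ : ℝ} (hX : ‖X‖ ≤ ρ) (hY : ‖Y‖ ≤ ρ) (s : ℕ) :
    ‖X ^ (s + 1) - Y ^ (s + 1)‖ ≤ (s + 1) * ρ ^ s * ‖X - Y‖ := by
  induction s with
  | zero => simp
  | succ s ih =>
    have hρ : 0 ≤ ρ := (norm_nonneg X).trans hX
    have hYpow : ‖Y ^ (s + 1)‖ ≤ ρ ^ (s + 1) :=
      (norm_pow_le' Y s.succ_pos).trans (pow_le_pow_left₀ (norm_nonneg Y) hY _)
    calc ‖X ^ (s + 2) - Y ^ (s + 2)‖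
        = ‖X * (X ^ (s + 1) - Y ^ (s + 1)) + (X - Y) * Y ^ (s + 1)‖ := by
          rw [mul_sub, sub_mul, ← pow_succ', ← pow_succ', sub_add_sub_cancel]
      _ ≤ ‖X‖ * ‖X ^ (s + 1) - Y ^ (s + 1)‖ + ‖X - Y‖ * ‖Y ^ (s + 1)‖ :=
          (norm_add_le _ _).trans (add_le_add (norm_mul_le _ _) (norm_mul_le _ _))
      _ ≤ ρ * ((s + 1) * ρ ^ s * ‖X - Y‖) + ‖X - Y‖ * ρ ^ (s + 1) := by gcongr
      _ = ((s + 1 : ℕ) + 1) * ρ ^ (s + 1) * ‖X - Y‖ := by push_cast; ring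

theorem norm_pow_sub_pow_le_of_succ_mul_pow_le {X Y : R} {ρ M c : ℝ} (hX : ‖X‖ ≤ ρ)
    (hY : ‖Y‖ ≤ ρ) (hM : ∀ s : ℕ, (s + 1) * ρ ^ s ≤ M) (hXY : ‖X - Y‖ ≤ c) :
    ∀ t : ℕ, ‖X ^ t - Y ^ t‖ ≤ M * c := by
  have hM1 : 1 ≤ M := by simpa using hM 0
  have hc : 0 ≤ c := (norm_nonneg _).trans hXY
  rintro (_ | s)
  · simpa using mul_nonneg (zero_le_one.trans hM1) hc
  · exact (norm_pow_succ_sub_pow_succ_le hX hY s).trans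
      (mul_le_mul (hM s) hXY (norm_nonneg _) (zero_le_one.trans hM1))

end NormedRing

theorem succ_mul_pow_le_iSup {ρ : ℝ} (hρ0 : 0 ≤ ρ) (hρ1 : ρ < 1) (s : ℕ) :
    (s + 1) * ρ ^ s ≤ ⨆ k : ℕ, ((k : ℝ) + 1) * ρ ^ k := by
  refine le_ciSup (f := fun k : ℕ => ((k : ℝ) + 1) * ρ ^ k) ⟨(1 - ρ)⁻¹, ?_⟩ s
  rintro _ ⟨k, rfl⟩
  calc ((k : ℝ) + 1) * ρ ^ k = ∑ _i ∈ range (k + 1), ρ ^ k := by simp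
    _ ≤ ∑ i ∈ range (k + 1), ρ ^ i := sum_le_sum fun i hi =>
        pow_le_pow_of_le_one hρ0 hρ1.le (Nat.lt_succ_iff.mp (mem_range.mp hi))
    _ ≤ ∑' i : ℕ, ρ ^ i :=
        (summable_geometric_of_lt_one hρ0 hρ1).sum_le_tsum _ fun i _ => pow_nonneg hρ0 i
    _ = (1 - ρ)⁻¹ := tsum_geometric_of_lt_one hρ0 hρ1

theorem abs_tsum_geometric_mul_sub_le {δ c θ : ℝ} {a b : ℕ → ℝ} (hδ0 : 0 ≤ δ) (hδ1 : δ < 1)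
    (ha : ∀ t, |a t| ≤ c) (hb : ∀ t, |b t| ≤ c) (hab : ∀ t, |a t - b t| ≤ θ) :
    |∑' t, δ ^ t * a t - ∑' t, δ ^ t * b t| ≤ θ / (1 - δ) := by
  have hgeom := hasSum_geometric_of_lt_one hδ0 hδ1
  have summable_of_le : ∀ f : ℕ → ℝ, (∀ t, |f t| ≤ c) → Summable fun t => δ ^ t * f t :=
    fun f hf => (hgeom.summable.mul_right c).of_norm_bounded fun t => by
      rw [Real.norm_eq_abs, abs_mul, abs_of_nonneg (pow_nonneg hδ0 t)]
      exact mul_le_mul_of_nonneg_left (hf t) (pow_nonneg hδ0 t)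
  rw [← (summable_of_le a ha).tsum_sub (summable_of_le b hb), ← Real.norm_eq_abs,
    div_eq_mul_inv]
  refine tsum_of_norm_bounded (hgeom.mul_left θ) fun t => ?_
  rw [← mul_sub, Real.norm_eq_abs, abs_mul, abs_of_nonneg (pow_nonneg hδ0 t), mul_comm θ]
  exact mul_le_mul_of_nonneg_left (hab t) (pow_nonneg hδ0 t)

namespace Matrix

variable {𝕜 : Type*} [RCLike 𝕜] {k l m n : Type*}
  [Fintype k] [Fintype l] [Fintype m] [Fintype n] [DecidableEq l] [DecidableEq n]

theorem l2_opNorm_one_le : ‖(1 : Matrix n n 𝕜)‖ ≤ 1 := by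
  rw [cstar_norm_def, map_one]
  exact ContinuousLinearMap.norm_id_le

theorem l2_opNorm_transpose [DecidableEq m] (A : Matrix m n ℝ) : ‖Aᵀ‖ = ‖A‖ := by
  rw [← conjTranspose_eq_transpose_of_trivial, l2_opNorm_conjTranspose]

theorem abs_dotProduct_mulVec_le (M : Matrix n n ℝ) (x : n → ℝ) :
    |x ⬝ᵥ M *ᵥ x| ≤ ‖M‖ * (x ⬝ᵥ x) := by
  have hsq : x ⬝ᵥ x = ‖WithLp.toLp 2 x‖ ^ 2 := by
    rw [← real_inner_self_eq_norm_sq, EuclideanSpace.inner_toLp_toLp]; rfl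
  rw [← inner_toEuclideanCLM, hsq]
  calc _ ≤ ‖WithLp.toLp 2 x‖ * ‖toEuclideanCLM (𝕜 := ℝ) M (WithLp.toLp 2 x)‖ :=
        abs_real_inner_le_norm _ _
    _ ≤ ‖WithLp.toLp 2 x‖ * (‖M‖ * ‖WithLp.toLp 2 x‖) := by
        gcongr; exact ContinuousLinearMap.le_opNorm _ _
    _ = ‖M‖ * ‖WithLp.toLp 2 x‖ ^ 2 := by ring

theorem l2_opNorm_transpose_mul_mul_le [DecidableEq k] [DecidableEq m] (U : Matrix m n ℝ)
    (S : Matrix m l ℝ) (V : Matrix l k ℝ) : ‖Uᵀ * S * V‖ ≤ ‖U‖ * ‖S‖ * ‖V‖ := by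
  calc ‖Uᵀ * S * V‖ ≤ ‖Uᵀ‖ * ‖S‖ * ‖V‖ :=
        (l2_opNorm_mul _ _).trans (by gcongr; exact l2_opNorm_mul _ _)
    _ = ‖U‖ * ‖S‖ * ‖V‖ := by rw [l2_opNorm_transpose]

theorem l2_opNorm_mul_sub_mul_le (A' A : Matrix m n ℝ) (P' P : Matrix n l ℝ) :
    ‖A' * P' - A * P‖ ≤ ‖A' - A‖ * ‖P'‖ + ‖A‖ * ‖P' - P‖ := by
  calc ‖A' * P' - A * P‖ = ‖(A' - A) * P' + A * (P' - P)‖ := by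
        rw [Matrix.sub_mul, Matrix.mul_sub, sub_add_sub_cancel]
    _ ≤ ‖A' - A‖ * ‖P'‖ + ‖A‖ * ‖P' - P‖ :=
        (norm_add_le _ _).trans (add_le_add (l2_opNorm_mul _ _) (l2_opNorm_mul _ _))

theorem l2_opNorm_mul_le_of_le {A : Matrix m n ℝ} {P : Matrix n l ℝ} {a b : ℝ} (hA : ‖A‖ ≤ a)
    (hP : ‖P‖ ≤ b) : ‖A * P‖ ≤ a * b :=
  (l2_opNorm_mul A P).trans (mul_le_mul hA hP (norm_nonneg P) ((norm_nonneg A).trans hA))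

theorem l2_opNorm_mul_sub_mul_le_of_le {A' A : Matrix m n ℝ} {P' P : Matrix n l ℝ} {c η : ℝ}
    (hA : ‖A' - A‖ ≤ c) (hP : ‖P' - P‖ ≤ η) (hP' : ‖P'‖ ≤ 1) :
    ‖A' * P' - A * P‖ ≤ ‖A‖ * η + c :=
  (l2_opNorm_mul_sub_mul_le A' A P' P).trans <| by
    have h1 : ‖A' - A‖ * ‖P'‖ ≤ c := by
      simpa using mul_le_mul hA hP' (norm_nonneg _) ((norm_nonneg _).trans hA)
    have h2 : ‖A‖ * ‖P' - P‖ ≤ ‖A‖ * η := mul_le_mul_of_nonneg_left hP (norm_nonneg A)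
    linarith

theorem l2_opNorm_transpose_mul_mul_sub_le [DecidableEq m] (U' U : Matrix m n ℝ)
    (S : Matrix m m ℝ) :
    ‖U'ᵀ * S * U' - Uᵀ * S * U‖ ≤ ‖U' - U‖ * ‖S‖ * (‖U'‖ + ‖U‖) := by
  calc ‖U'ᵀ * S * U' - Uᵀ * S * U‖ = ‖U'ᵀ * S * (U' - U) + (U' - U)ᵀ * S * U‖ := by
        rw [Matrix.mul_sub, transpose_sub, Matrix.sub_mul, Matrix.sub_mul, sub_add_sub_cancel]
    _ ≤ ‖U'‖ * ‖S‖ * ‖U' - U‖ + ‖U' - U‖ * ‖S‖ * ‖U‖ :=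
        (norm_add_le _ _).trans (add_le_add (l2_opNorm_transpose_mul_mul_le _ _ _)
          (l2_opNorm_transpose_mul_mul_le _ _ _))
    _ = ‖U' - U‖ * ‖S‖ * (‖U'‖ + ‖U‖) := by ring

end Matrix

namespace LQGame

variable {ι : Type*} [Fintype ι] {m : ι → Type*} [∀ j, Fintype (m j)] {k n p r : Type*}
  [Fintype p]

def closedLoop (A : Matrix r n ℝ) (B : ∀ j, Matrix r (m j) ℝ) (K : ∀ j, Matrix (m j) n ℝ) :
    Matrix r n ℝ :=
  A + ∑ j, B j * K j

def stageWeight (Q : Matrix p p ℝ) (R : ∀ j, Matrix (m j) (m j) ℝ) (G : Matrix p n ℝ)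
    (K : ∀ j, Matrix (m j) n ℝ) : Matrix n n ℝ :=
  Gᵀ * Q * G + ∑ j, (K j)ᵀ * R j * K j

theorem closedLoop_sub_closedLoop (A : Matrix r n ℝ) (B : ∀ j, Matrix r (m j) ℝ)
    (K' K : ∀ j, Matrix (m j) n ℝ) :
    closedLoop A B K' - closedLoop A B K = ∑ j, B j * (K' j - K j) := by
  simp only [closedLoop, Matrix.mul_sub, sum_sub_distrib, add_sub_add_left_eq_sub]

variable [Fintype n]

theorem transpose_mul_stageWeight_mul (Q : Matrix p p ℝ) (R : ∀ j, Matrix (m j) (m j) ℝ)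
    (G : Matrix p n ℝ) (K : ∀ j, Matrix (m j) n ℝ) (P : Matrix n k ℝ) :
    Pᵀ * stageWeight Q R G K * P = stageWeight Q R (G * P) (fun j => K j * P) := by
  simp only [stageWeight, transpose_mul, Matrix.add_mul, Matrix.mul_add, Matrix.sum_mul,
    Matrix.mul_sum, Matrix.mul_assoc]

variable [∀ j, DecidableEq (m j)] [Fintype k] [Fintype r] [DecidableEq k] [DecidableEq n]
  [DecidableEq p]

/-- The paper's `Jⁱ(x₁)`, with time shifted to start at `0`. -/
noncomputable def discountedCost (δ : ℝ) (F W : Matrix n n ℝ) (x : n → ℝ) : ℝ :=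
  1 / 2 * ∑' t : ℕ, δ ^ t * (x ⬝ᵥ ((F ^ t)ᵀ * W * F ^ t) *ᵥ x)

theorem l2_opNorm_closedLoop_sub_le (A : Matrix r n ℝ) (B : ∀ j, Matrix r (m j) ℝ)
    {K' K : ∀ j, Matrix (m j) n ℝ} {ε : ℝ} (hK : ∀ j, ‖K' j - K j‖ ≤ ε) :
    ‖closedLoop A B K' - closedLoop A B K‖ ≤ (∑ j, ‖B j‖) * ε := by
  rw [closedLoop_sub_closedLoop, sum_mul]
  exact (norm_sum_le _ _).trans <| sum_le_sum fun j _ =>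
    (l2_opNorm_mul _ _).trans (mul_le_mul_of_nonneg_left (hK j) (norm_nonneg _))

theorem l2_opNorm_stageWeight_sub_le (Q : Matrix p p ℝ) (R : ∀ j, Matrix (m j) (m j) ℝ)
    (G' G : Matrix p n ℝ) (K' K : ∀ j, Matrix (m j) n ℝ) :
    ‖stageWeight Q R G' K' - stageWeight Q R G K‖
      ≤ ‖G' - G‖ * ‖Q‖ * (‖G'‖ + ‖G‖) + ∑ j, ‖K' j - K j‖ * ‖R j‖ * (‖K' j‖ + ‖K j‖) := by
  rw [stageWeight, stageWeight, add_sub_add_comm, ← sum_sub_distrib]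
  exact (norm_add_le _ _).trans <| add_le_add (l2_opNorm_transpose_mul_mul_sub_le _ _ _) <|
    (norm_sum_le _ _).trans <| sum_le_sum fun j _ => l2_opNorm_transpose_mul_mul_sub_le _ _ _

/-- The per-step perturbation bound behind the constants `G_{i1}` and `G_{i2}`. -/
theorem l2_opNorm_stageWeight_mul_sub_le (Q : Matrix p p ℝ) (R : ∀ j, Matrix (m j) (m j) ℝ)
    {G' G : Matrix p n ℝ} {K' K : ∀ j, Matrix (m j) n ℝ} {P' P : Matrix n k ℝ} {e ε η : ℝ}
    (hG : ‖G' - G‖ ≤ e) (hK : ∀ j, ‖K' j - K j‖ ≤ ε) (hP : ‖P' - P‖ ≤ η)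
    (hP'1 : ‖P'‖ ≤ 1) (hP1 : ‖P‖ ≤ 1) :
    ‖stageWeight Q R (G' * P') (fun j => K' j * P') - stageWeight Q R (G * P) (fun j => K j * P)‖
      ≤ 2 * ((‖G‖ + e) * η + e) * ‖Q‖ * (‖G‖ + e)
        + ∑ j, ‖R j‖ * (‖K j‖ * η + ε) * (2 * ‖K j‖ + ε) := by
  have hη : 0 ≤ η := (norm_nonneg _).trans hP
  have he : 0 ≤ e := (norm_nonneg _).trans hG
  have hG' : ‖G'‖ ≤ ‖G‖ + e := (norm_le_norm_add_norm_sub' G' G).trans (by gcongr)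
  refine (l2_opNorm_stageWeight_sub_le _ _ _ _ _ _).trans
    (add_le_add ?_ (sum_le_sum fun j _ => ?_))
  · calc _ ≤ ((‖G‖ + e) * η + e) * ‖Q‖ * ((‖G‖ + e) * 1 + (‖G‖ + e) * 1) := by
          gcongr
          · refine (l2_opNorm_mul_sub_mul_le_of_le hG hP hP'1).trans ?_
            gcongr
            exact le_add_of_nonneg_right he
          · exact l2_opNorm_mul_le_of_le hG' hP'1
          · exact l2_opNorm_mul_le_of_le (le_add_of_nonneg_right he) hP1
      _ = _ := by ring
  · have hε : 0 ≤ ε := (norm_nonneg _).trans (hK j)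
    have hK' : ‖K' j‖ ≤ ‖K j‖ + ε :=
      (norm_le_norm_add_norm_sub' _ _).trans (by gcongr; exact hK j)
    calc _ ≤ (‖K j‖ * η + ε) * ‖R j‖ * ((‖K j‖ + ε) * 1 + ‖K j‖ * 1) := by
          refine mul_le_mul (mul_le_mul_of_nonneg_right ?_ (norm_nonneg _)) (add_le_add ?_ ?_)
            (by positivity) (by positivity)
          · exact l2_opNorm_mul_sub_mul_le_of_le (hK j) hP hP'1
          · exact l2_opNorm_mul_le_of_le hK' hP'1
          · exact l2_opNorm_mul_le_of_le le_rfl hP1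
      _ = _ := by ring

theorem abs_discountedCost_sub_le {δ θ : ℝ} (hδ0 : 0 ≤ δ) (hδ1 : δ < 1)
    {F' F W' W : Matrix n n ℝ} (hF' : ∀ t, ‖F' ^ t‖ ≤ 1) (hF : ∀ t, ‖F ^ t‖ ≤ 1)
    (hstep : ∀ t, ‖(F' ^ t)ᵀ * W' * F' ^ t - (F ^ t)ᵀ * W * F ^ t‖ ≤ θ) (x : n → ℝ) :
    |discountedCost δ F' W' x - discountedCost δ F W x| ≤ 1 / 2 * (x ⬝ᵥ x) * θ * (1 / (1 - δ)) := by
  have hxx : 0 ≤ x ⬝ᵥ x := by simpa using dotProduct_self_star_nonneg x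
  have hquad : ∀ (V P : Matrix n n ℝ), ‖P‖ ≤ 1 → |x ⬝ᵥ (Pᵀ * V * P) *ᵥ x| ≤ ‖V‖ * (x ⬝ᵥ x) :=
    fun V P hP => (abs_dotProduct_mulVec_le _ x).trans <| by
      gcongr
      calc ‖Pᵀ * V * P‖ ≤ ‖P‖ * ‖V‖ * ‖P‖ := l2_opNorm_transpose_mul_mul_le P V P
        _ ≤ 1 * ‖V‖ * 1 := by gcongr
        _ = ‖V‖ := by ring
  have hseries := abs_tsum_geometric_mul_sub_le hδ0 hδ1 (c := max ‖W'‖ ‖W‖ * (x ⬝ᵥ x))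
    (a := fun t => x ⬝ᵥ ((F' ^ t)ᵀ * W' * F' ^ t) *ᵥ x)
    (b := fun t => x ⬝ᵥ ((F ^ t)ᵀ * W * F ^ t) *ᵥ x)
    (fun t => (hquad W' _ (hF' t)).trans (by gcongr; exact le_max_left _ _))
    (fun t => (hquad W _ (hF t)).trans (by gcongr; exact le_max_right _ _))
    (fun t => by
      rw [← dotProduct_sub, ← Matrix.sub_mulVec]
      exact (abs_dotProduct_mulVec_le _ x).trans (mul_le_mul_of_nonneg_right (hstep t) hxx))
  rw [discountedCost, discountedCost, ← mul_sub, abs_mul, abs_of_pos one_half_pos]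
  calc _ ≤ 1 / 2 * (θ * (x ⬝ᵥ x) / (1 - δ)) := by gcongr
    _ = _ := by ring

end LQGame

theorem sn_eq_norm {r c : ℕ} (A : Matrix (Fin r) (Fin c) ℝ) : sn A = ‖A‖ := rfl

open LQGame

theorem stmt15_general {N n p : ℕ} {m : Fin N → ℕ}
    (A : Matrix (Fin n) (Fin n) ℝ)
    (B : (j : Fin N) → Matrix (Fin n) (Fin (m j)) ℝ)
    (C : Matrix (Fin p) (Fin n) ℝ)
    (D : (j : Fin N) → Matrix (Fin p) (Fin (m j)) ℝ)
    (Q : Fin N → Matrix (Fin p) (Fin p) ℝ)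
    (R : (i j : Fin N) → Matrix (Fin (m j)) (Fin (m j)) ℝ)
    (δ : Fin N → ℝ)
    (hδ : ∀ i, 0 < δ i ∧ δ i < 1)
    (Kstar Ktil : (j : Fin N) → Matrix (Fin (m j)) (Fin n) ℝ)
    (ε : ℝ) (hε : 0 ≤ ε) (hKε : ∀ j, sn (Ktil j - Kstar j) ≤ ε)
    -- named intermediate quantities, fixed by their defining equations
    (lam b d M gε : ℝ) (Gi1 Gi2 θ : Fin N → ℝ)
    (hlam : lam = sn (A + ∑ j, B j * Kstar j))
    (hb : b = ∑ j, sn (B j))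
    (hd : d = ∑ j, sn (D j))
    (hstab : lam + b * ε < 1)
    (hM : M = ⨆ s : ℕ, ((s : ℝ) + 1) * (lam + b * ε) ^ s)
    (hg : gε = (sn (C + ∑ j, D j * Kstar j) + d * ε) * M * b * ε + d * ε)
    (hGi1 : ∀ i, Gi1 i = 2 * gε * sn (Q i) * (sn (C + ∑ j, D j * Kstar j) + d * ε))
    (hGi2 : ∀ i, Gi2 i =
      ε ^ 2 * ∑ j, sn (R i j) * (sn (Kstar j) * b * M + 1)
      + 2 * ε * ∑ j, sn (R i j) * sn (Kstar j) * (sn (Kstar j) * b * M + 1))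
    (hθ : ∀ i, θ i = Gi1 i + Gi2 i) :
    ∀ (i : Fin N) (x₁ : Fin n → ℝ),
      |(1 / 2) * ∑' t : ℕ, (δ i) ^ t *
          (x₁ ⬝ᵥ (((A + ∑ j, B j * Ktil j) ^ t)ᵀ *
            ((C + ∑ j, D j * Ktil j)ᵀ * Q i * (C + ∑ j, D j * Ktil j)
              + ∑ j, (Ktil j)ᵀ * R i j * Ktil j) *
            (A + ∑ j, B j * Ktil j) ^ t).mulVec x₁)
        - (1 / 2) * ∑' t : ℕ, (δ i) ^ t *
          (x₁ ⬝ᵥ (((A + ∑ j, B j * Kstar j) ^ t)ᵀ *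
            ((C + ∑ j, D j * Kstar j)ᵀ * Q i * (C + ∑ j, D j * Kstar j)
              + ∑ j, (Kstar j)ᵀ * R i j * Kstar j) *
            (A + ∑ j, B j * Kstar j) ^ t).mulVec x₁)|
      ≤ (1 / 2) * (x₁ ⬝ᵥ x₁) * θ i * (1 / (1 - δ i)) := by
  intro i x₁
  simp only [sn_eq_norm] at hKε hlam hb hd hg hGi1 hGi2
  show |discountedCost (δ i) (closedLoop A B Ktil)
      (stageWeight (Q i) (R i) (closedLoop C D Ktil) Ktil) x₁
    - discountedCost (δ i) (closedLoop A B Kstar)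
      (stageWeight (Q i) (R i) (closedLoop C D Kstar) Kstar) x₁| ≤ _
  have hlam0 : 0 ≤ lam := hlam ▸ norm_nonneg _
  have hb0 : 0 ≤ b := hb ▸ sum_nonneg fun j _ => norm_nonneg _
  have hFF' : ‖closedLoop A B Ktil - closedLoop A B Kstar‖ ≤ b * ε := by
    rw [hb]; exact l2_opNorm_closedLoop_sub_le A B hKε
  have hGG' : ‖closedLoop C D Ktil - closedLoop C D Kstar‖ ≤ d * ε := by
    rw [hd]; exact l2_opNorm_closedLoop_sub_le C D hKε
  have hF : ‖closedLoop A B Kstar‖ = lam := hlam.symm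
  have hFρ : ‖closedLoop A B Kstar‖ ≤ lam + b * ε :=
    hF.le.trans (le_add_of_nonneg_right (mul_nonneg hb0 hε))
  have hF'ρ : ‖closedLoop A B Ktil‖ ≤ lam + b * ε :=
    (norm_le_norm_add_norm_sub' _ (closedLoop A B Kstar)).trans (by linarith)
  have hpow : ∀ {X : Matrix (Fin n) (Fin n) ℝ}, ‖X‖ ≤ lam + b * ε → ∀ t, ‖X ^ t‖ ≤ 1 :=
    fun hX => norm_pow_le_one_of_norm_le_one l2_opNorm_one_le (hX.trans hstab.le)
  have hMs : ∀ s : ℕ, (s + 1) * (lam + b * ε) ^ s ≤ M :=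
    hM ▸ succ_mul_pow_le_iSup (by positivity) hstab
  refine abs_discountedCost_sub_le (hδ i).1.le (hδ i).2 (hpow hF'ρ) (hpow hFρ) (fun t => ?_) x₁
  rw [transpose_mul_stageWeight_mul, transpose_mul_stageWeight_mul]
  refine (l2_opNorm_stageWeight_mul_sub_le (Q i) (R i) hGG' hKε
    (norm_pow_sub_pow_le_of_succ_mul_pow_le hF'ρ hFρ hMs hFF' t) (hpow hF'ρ t)
    (hpow hFρ t)).trans_eq ?_
  rw [closedLoop, hθ, hGi1, hGi2, hg, mul_sum, mul_sum, ← sum_add_distrib]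
  exact congrArg₂ (· + ·) (by ring) (sum_congr rfl fun j _ => by ring)

/-- Theorem 1, part 2: explicit cost-gap bound.  With
`F* = A + Σⱼ BʲK^{j*}`, `G* = C + Σⱼ DʲK^{j*}`, `F̃ = A + Σⱼ BʲK̃ʲ`, `G̃ = C + Σⱼ DʲK̃ʲ`,
`‖K̃ʲ − K^{j*}‖₂ ≤ ε`, `λ = ‖F*‖₂`, `b = Σⱼ‖Bʲ‖₂`, `d = Σⱼ‖Dʲ‖₂`, `λ + bε < 1`,
`M = sup_{t≥2}(t−1)(λ+bε)^{t−2}`, `g(ε) = (‖G*‖₂+dε)Mbε + dε`,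
`G_{i1}(ε) = 2g(ε)‖Qⁱ‖₂(‖G*‖₂+dε)`,
`G_{i2}(ε) = ε²Σⱼ‖Rⁱʲ‖₂(‖K^{j*}‖₂bM+1) + 2εΣⱼ‖Rⁱʲ‖₂‖K^{j*}‖₂(‖K^{j*}‖₂bM+1)`,
`θᵢ(ε) = G_{i1}(ε)+G_{i2}(ε)`, the infinite-horizon discounted quadratic costs satisfy
`|J̃ⁱ(x₁) − Jⁱ(x₁)| ≤ ½‖x₁‖₂² θᵢ(ε)/(1−δⁱ)`. -/
theorem stmt15 {N n p : ℕ} {m : Fin N → ℕ}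
    (hN : 0 < N) (hn : 0 < n) (hp : 0 < p) (hm : ∀ j, 0 < m j)
    (A : Matrix (Fin n) (Fin n) ℝ)
    (B : (j : Fin N) → Matrix (Fin n) (Fin (m j)) ℝ)
    (C : Matrix (Fin p) (Fin n) ℝ)
    (D : (j : Fin N) → Matrix (Fin p) (Fin (m j)) ℝ)
    (Q : Fin N → Matrix (Fin p) (Fin p) ℝ)
    (R : (i j : Fin N) → Matrix (Fin (m j)) (Fin (m j)) ℝ)
    (δ : Fin N → ℝ)
    (hQ : ∀ i, (Q i).IsSymm)
    (hR : ∀ i j, (R i j).IsSymm)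
    (hδ : ∀ i, 0 < δ i ∧ δ i < 1)
    (Kstar Ktil : (j : Fin N) → Matrix (Fin (m j)) (Fin n) ℝ)
    (ε : ℝ) (hε : 0 ≤ ε) (hKε : ∀ j, sn (Ktil j - Kstar j) ≤ ε)
    -- named intermediate quantities, fixed by their defining equations
    (lam b d M gε : ℝ) (Gi1 Gi2 θ : Fin N → ℝ)
    (hlam : lam = sn (A + ∑ j, B j * Kstar j))
    (hb : b = ∑ j, sn (B j))
    (hd : d = ∑ j, sn (D j))
    (hstab : lam + b * ε < 1)
    (hM : M = ⨆ s : ℕ, ((s : ℝ) + 1) * (lam + b * ε) ^ s)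
    (hg : gε = (sn (C + ∑ j, D j * Kstar j) + d * ε) * M * b * ε + d * ε)
    (hGi1 : ∀ i, Gi1 i = 2 * gε * sn (Q i) * (sn (C + ∑ j, D j * Kstar j) + d * ε))
    (hGi2 : ∀ i, Gi2 i =
      ε ^ 2 * ∑ j, sn (R i j) * (sn (Kstar j) * b * M + 1)
      + 2 * ε * ∑ j, sn (R i j) * sn (Kstar j) * (sn (Kstar j) * b * M + 1))
    (hθ : ∀ i, θ i = Gi1 i + Gi2 i) :
    ∀ (i : Fin N) (x₁ : Fin n → ℝ),
      |(1 / 2) * ∑' t : ℕ, (δ i) ^ t *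
          (x₁ ⬝ᵥ (((A + ∑ j, B j * Ktil j) ^ t)ᵀ *
            ((C + ∑ j, D j * Ktil j)ᵀ * Q i * (C + ∑ j, D j * Ktil j)
              + ∑ j, (Ktil j)ᵀ * R i j * Ktil j) *
            (A + ∑ j, B j * Ktil j) ^ t).mulVec x₁)
        - (1 / 2) * ∑' t : ℕ, (δ i) ^ t *
          (x₁ ⬝ᵥ (((A + ∑ j, B j * Kstar j) ^ t)ᵀ *
            ((C + ∑ j, D j * Kstar j)ᵀ * Q i * (C + ∑ j, D j * Kstar j)
              + ∑ j, (Kstar j)ᵀ * R i j * Kstar j) *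
            (A + ∑ j, B j * Kstar j) ^ t).mulVec x₁)|
      ≤ (1 / 2) * (x₁ ⬝ᵥ x₁) * θ i * (1 / (1 - δ i)) :=
  stmt15_general A B C D Q R δ hδ Kstar Ktil ε hε hKε lam b d M gε Gi1 Gi2 θ hlam hb hd hstab hM hg
    hGi1 hGi2 hθ
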